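/- Let π : X → B be an étale bundle (a surjective local homeomorphism) such that B is a sober space. Then the generalised Munn semigroup T_{Γ(π)} of the sheaf of sections Γ(π), regarded as a presheaf over the semilattice Ω(B), is isomorphic to the inverse semigroup La(π) of principal partial automorphisms of π. -/

import Mathlib

/-- A meet-semilattice: a commutative semigroup all of whose elements are idempotent. -/
class MeetSL (E : Type*) extends CommSemigroup E where
  idem : ∀ e : E, e * e = e

/-- The natural partial order on a meet-semilattice: `e ≤ f` iff `e = ef`. -/
def sle {E : Type*} [MeetSL E] (e f : E) : Prop := e = e * f

/-- The principal order-ideal `e↓ = {h ∈ E : h ≤ e}` of a meet-semilattice. -/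
abbrev dOn (E : Type*) [MeetSL E] (e : E) : Type _ := {h : E // sle h e}

/-- A presheaf of sets over a meet-semilattice `E`, viewed as a supported action
`(X, E, p)` of `E` on `X`. -/
structure SPresheaf (X : Type*) (E : Type*) [MeetSL E] where
  act : X → E → X
  p : X → E
  act_act : ∀ x e f, act (act x e) f = act x (e * f)
  act_p : ∀ x, act x (p x) = x
  p_act : ∀ x e, p (act x e) = p x * e

namespace SPresheaf
variable {X E : Type*} [MeetSL E]

/-- The natural partial order on a presheaf: `x ≤ y` iff `x = y · p(x)`. -/
def xle (P : SPresheaf X E) (x y : X) : Prop := x = P.act y (P.p x)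

/-- The underlying set `X · e = {x ∈ X : p(x) ≤ e}` of the principal subpresheaf at `e`. -/
abbrev sub (P : SPresheaf X E) (e : E) : Type _ := {x : X // sle (P.p x) e}

end SPresheaf

/-- An element of the generalised Munn semigroup `T_X` of the presheaf `P`: an isomorphism
`(α, θ)` between the principal subpresheaves `(X·e, e↓)` and `(X·f, f↓)`, i.e. a pair of
order-isomorphisms with `p(α(x)) = θ(p(x))` for all `x ∈ X·e`. -/
structure MunnElt {X E : Type*} [MeetSL E] (P : SPresheaf X E) where
  e : E
  f : E
  α : P.sub e ≃ P.sub f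
  θ : dOn E e ≃ dOn E f
  α_ord : ∀ x y : P.sub e, P.xle x.1 y.1 ↔ P.xle (α x).1 (α y).1
  θ_ord : ∀ a b : dOn E e, sle a.1 b.1 ↔ sle (θ a).1 (θ b).1
  compat : ∀ x : P.sub e, P.p (α x).1 = (θ ⟨P.p x.1, x.2⟩).1

namespace MunnElt
variable {X E : Type*} [MeetSL E] {P : SPresheaf X E}

/-- The partial-bijection graph of the first component of a Munn element. -/
def maps (t : MunnElt P) (x y : X) : Prop :=
  ∃ h : sle (P.p x) t.e, (t.α ⟨x, h⟩).1 = y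

/-- The partial-bijection graph of the second component of a Munn element. -/
def mapsE (t : MunnElt P) (a b : E) : Prop :=
  ∃ h : sle a t.e, (t.θ ⟨a, h⟩).1 = b

end MunnElt

/-- `mul` is the multiplication of the generalised Munn semigroup `T_X`: the product
`mul a b` is obtained by restricting `a` and `b` to the intersection of the relevant
principal subpresheaves and composing (apply `b` first, then `a`). -/
def IsMunnMul {X E : Type*} [MeetSL E] {P : SPresheaf X E}
    (mul : MunnElt P → MunnElt P → MunnElt P) : Prop :=
  ∀ a b : MunnElt P,
    (∀ x z : X, (mul a b).maps x z ↔ ∃ y, b.maps x y ∧ a.maps y z) ∧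
    (∀ h k : E, (mul a b).mapsE h k ↔ ∃ m, b.mapsE h m ∧ a.mapsE m k)

/-- `inv` sends each `(α, θ)` of the generalised Munn semigroup to `(α⁻¹, θ⁻¹)`. -/
def IsMunnInv {X E : Type*} [MeetSL E] {P : SPresheaf X E}
    (inv : MunnElt P → MunnElt P) : Prop :=
  ∀ t : MunnElt P,
    (∀ x y : X, (inv t).maps x y ↔ t.maps y x) ∧
    (∀ a b : E, (inv t).mapsE a b ↔ t.mapsE b a)

/-- The meet-semilattice `Ω(B)` of open subsets of a topological space under intersection. -/
abbrev OpenSets (B : Type*) [TopologicalSpace B] : Type _ := {U : Set B // IsOpen U}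

instance instMeetSLOpenSets (B : Type*) [TopologicalSpace B] : MeetSL (OpenSets B) where
  mul a b := ⟨a.1 ∩ b.1, a.2.inter b.2⟩
  mul_assoc a b c := Subtype.ext (Set.inter_assoc a.1 b.1 c.1)
  mul_comm a b := Subtype.ext (Set.inter_comm a.1 b.1)
  idem a := Subtype.ext (Set.inter_self a.1)

/-- A local section of a bundle `π : X → B`: a continuous map `σ : U → X` with `U ⊆ B`
open and `π ∘ σ = id`. -/
structure LocalSection {X B : Type*} [TopologicalSpace X] [TopologicalSpace B] (π : X → B) where
  dom : Set B
  dom_open : IsOpen dom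
  toFun : ↥dom → X
  cont : Continuous toFun
  sect : ∀ b : ↥dom, π (toFun b) = b.1

theorem LocalSection.ext' {X B : Type*} [TopologicalSpace X] [TopologicalSpace B] {π : X → B}
    {s t : LocalSection π} (hd : s.dom = t.dom)
    (h : ∀ (b : B) (hs : b ∈ s.dom) (ht : b ∈ t.dom), s.toFun ⟨b, hs⟩ = t.toFun ⟨b, ht⟩) :
    s = t := by
  cases s with | mk d o f c se =>
  cases t with | mk d' o' f' c' se' =>
  dsimp at hd
  subst hd
  have hf : f = f' := funext fun b => h b.1 b.2 b.2
  subst hf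
  rfl

/-- A principal partial automorphism of the bundle `π : X → B` (an element of `La(π)`):
a pair of homeomorphisms `θ : π⁻¹(U) → π⁻¹(V)`, `θ̂ : U → V` with `π ∘ θ = θ̂ ∘ π`. -/
structure PPAuto {X B : Type*} [TopologicalSpace X] [TopologicalSpace B] (π : X → B) where
  U : Set B
  V : Set B
  U_open : IsOpen U
  V_open : IsOpen V
  top : ↥(π ⁻¹' U) ≃ₜ ↥(π ⁻¹' V)
  bot : ↥U ≃ₜ ↥V
  comm : ∀ x : ↥(π ⁻¹' U), π (top x).1 = (bot ⟨π x.1, x.2⟩).1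

namespace PPAuto
variable {X B : Type*} [TopologicalSpace X] [TopologicalSpace B] {π : X → B}

/-- The graph of the upstairs component. -/
def mapsTop (t : PPAuto π) (x y : X) : Prop :=
  ∃ h : x ∈ π ⁻¹' t.U, (t.top ⟨x, h⟩).1 = y

/-- The graph of the downstairs component. -/
def mapsBot (t : PPAuto π) (u v : B) : Prop :=
  ∃ h : u ∈ t.U, (t.bot ⟨u, h⟩).1 = v

end PPAuto

/-- `mul` is the multiplication of `La(π)`: coordinatewise composition of partial
homeomorphisms (apply `b` first, then `a`). -/
def IsPPMul {X B : Type*} [TopologicalSpace X] [TopologicalSpace B] {π : X → B}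
    (mul : PPAuto π → PPAuto π → PPAuto π) : Prop :=
  ∀ a b : PPAuto π,
    (∀ x z : X, (mul a b).mapsTop x z ↔ ∃ y, b.mapsTop x y ∧ a.mapsTop y z) ∧
    (∀ u w : B, (mul a b).mapsBot u w ↔ ∃ v, b.mapsBot u v ∧ a.mapsBot v w)

/-- `inv` is the inversion of `La(π)`. -/
def IsPPInv {X B : Type*} [TopologicalSpace X] [TopologicalSpace B] {π : X → B}
    (inv : PPAuto π → PPAuto π) : Prop :=
  ∀ t : PPAuto π,
    (∀ x y : X, (inv t).mapsTop x y ↔ t.mapsTop y x) ∧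
    (∀ u v : B, (inv t).mapsBot u v ↔ t.mapsBot v u)

/-- The sheaf of local sections `Γ(π)` of a bundle `π : X → B`, as a presheaf over the
meet-semilattice of open subsets of `B`: the action is restriction of sections
(`σ · V = σ|_{V ∩ dom σ}`) and the support map is `p(σ) = dom σ`. -/
def sectionsPresheaf {X B : Type*} [TopologicalSpace X] [TopologicalSpace B] (π : X → B) :
    SPresheaf (LocalSection π) (OpenSets B) where
  act σ V :=
    { dom := σ.dom ∩ V.1
      dom_open := σ.dom_open.inter V.2
      toFun := fun b => σ.toFun ⟨b.1, b.2.1⟩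
      cont := σ.cont.comp (Continuous.subtype_mk continuous_subtype_val fun b => b.2.1)
      sect := fun b => σ.sect ⟨b.1, b.2.1⟩ }
  p σ := ⟨σ.dom, σ.dom_open⟩
  act_act σ e f := LocalSection.ext' (Set.inter_assoc σ.dom e.1 f.1) (fun _ _ _ => rfl)
  act_p σ := LocalSection.ext' (Set.inter_self σ.dom) (fun _ _ _ => rfl)
  p_act _ _ := rfl

/-!
Over a sober space the frame of opens determines the points: a frame map
`f : Ω(Y) → Ω(X)` is the preimage map of a unique continuous `X → Y`, which sends `x` to the
generic point of the complement of the largest open `V` with `x ∉ f V`. Hence the second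
component `θ` of a Munn element `(α, θ)` is induced by a homeomorphism `θ̂ : U → V` of the base.
Upstairs, a point `x` over `U` lies on a section `σ` over an open subset of `U`, and `x` is sent
to the point of `α σ` over `θ̂ (π x)`. This does not depend on `σ`: two sections through `x`
agree on a neighbourhood of `π x` because `π` is a local homeomorphism, and `α` preserves
restriction. Conversely, a principal partial automorphism `(θ, θ̂)` acts on sections by
`σ ↦ θ ∘ σ ∘ θ̂⁻¹`. The two constructions are mutually inverse, and both turn composites into
composites.
-/

open TopologicalSpace

/-! ### Sober spaces and their frames of opens -/

section SoberOpens
variable {X Y : Type*} [TopologicalSpace X] [TopologicalSpace Y]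

theorem FrameHom.exists_forall_mem_iff_mem_apply [QuasiSober Y]
    (f : FrameHom (Opens Y) (Opens X)) (x : X) : ∃ y : Y, ∀ V : Opens Y, y ∈ V ↔ x ∈ f V := by
  set O : Opens Y := sSup {V | x ∉ f V}
  have hO : x ∉ f O := by simp [O, map_sSup, Opens.mem_sSup]
  have meets : ∀ V : Opens Y, ((O : Set Y)ᶜ ∩ V).Nonempty ↔ x ∈ f V := by
    intro V
    rw [Set.inter_comm, Set.inter_compl_nonempty_iff, SetLike.coe_subset_coe]
    exact ⟨fun hV => by_contra fun hx => hV (le_sSup hx),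
      fun hx hV => hO (OrderHomClass.mono f hV hx)⟩
  have hirr : IsIrreducible (O : Set Y)ᶜ := by
    refine ⟨by simpa using (meets ⊤).2 (by simp), fun V W hV hW hxV hxW => ?_⟩
    refine (meets (⟨V, hV⟩ ⊓ ⟨W, hW⟩)).2 ?_
    rw [map_inf]
    exact ⟨(meets ⟨V, hV⟩).1 hxV, (meets ⟨W, hW⟩).1 hxW⟩
  refine ⟨hirr.genericPoint, fun V => ?_⟩
  rw [← SetLike.mem_coe,
    (hirr.isGenericPoint_genericPoint O.isOpen.isClosed_compl).mem_open_set_iff V.isOpen, meets]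

theorem Opens.exists_comap_eq [QuasiSober Y] (f : FrameHom (Opens Y) (Opens X)) :
    ∃ g : C(X, Y), Opens.comap g = f := by
  choose g hg using f.exists_forall_mem_iff_mem_apply
  refine ⟨⟨g, continuous_def.2 fun V hV => ?_⟩,
    FrameHom.ext fun V => Opens.ext (Set.ext fun x => hg x V)⟩
  convert (f ⟨V, hV⟩).isOpen
  exact Set.ext fun x => hg x ⟨V, hV⟩

end SoberOpens

namespace Homeomorph
variable {X Y : Type*} [TopologicalSpace X] [TopologicalSpace Y]
  [QuasiSober X] [T0Space X] [QuasiSober Y] [T0Space Y]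

theorem exists_mem_iff_of_opensOrderIso (φ : Opens Y ≃o Opens X) :
    ∃ h : X ≃ₜ Y, ∀ x V, h x ∈ V ↔ x ∈ φ V := by
  obtain ⟨g, hg⟩ := Opens.exists_comap_eq (φ : FrameHom (Opens Y) (Opens X))
  obtain ⟨g', hg'⟩ := Opens.exists_comap_eq (φ.symm : FrameHom (Opens X) (Opens Y))
  have hg'g : g'.comp g = ContinuousMap.id X := Opens.comap_injective <| by
    rw [Opens.comap_comp, hg, hg', Opens.comap_id]
    exact FrameHom.ext fun V => φ.apply_symm_apply V
  have hgg' : g.comp g' = ContinuousMap.id Y := Opens.comap_injective <| by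
    rw [Opens.comap_comp, hg, hg', Opens.comap_id]
    exact FrameHom.ext fun V => φ.symm_apply_apply V
  refine ⟨⟨⟨g, g', DFunLike.congr_fun hg'g, DFunLike.congr_fun hgg'⟩, g.continuous, g'.continuous⟩,
    fun x V => ?_⟩
  change g x ∈ V ↔ _
  rw [← Opens.mem_comap, hg]
  rfl

noncomputable def ofOpensOrderIso (φ : Opens Y ≃o Opens X) : X ≃ₜ Y :=
  (exists_mem_iff_of_opensOrderIso φ).choose

theorem ofOpensOrderIso_mem_iff (φ : Opens Y ≃o Opens X) {x : X} {V : Opens Y} :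
    ofOpensOrderIso φ x ∈ V ↔ x ∈ φ V :=
  (exists_mem_iff_of_opensOrderIso φ).choose_spec x V

theorem ofOpensOrderIso_apply_eq (φ : Opens Y ≃o Opens X) {x : X} {y : Y}
    (h : ∀ V : Opens Y, y ∈ V ↔ x ∈ φ V) : ofOpensOrderIso φ x = y :=
  Inseparable.eq <| inseparable_iff_forall_isOpen.2 fun V hV =>
    (ofOpensOrderIso_mem_iff φ (V := ⟨V, hV⟩)).trans (h ⟨V, hV⟩).symm

end Homeomorph

/-! ### The base homeomorphism of a Munn element -/

namespace OpenSets
variable {B : Type*} [TopologicalSpace B]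

theorem sle_iff {a b : OpenSets B} : sle a b ↔ a.1 ⊆ b.1 := by
  rw [sle, Subtype.ext_iff]
  exact ⟨fun h => h ▸ Set.inter_subset_right, fun h => (Set.inter_eq_left.2 h).symm⟩

instance quasiSober [QuasiSober B] (U : OpenSets B) : QuasiSober ↥U.1 :=
  U.2.isOpenEmbedding_subtypeVal.quasiSober

def opensEquiv (U : OpenSets B) : dOn (OpenSets B) U ≃ Opens ↥U.1 where
  toFun W := ⟨Subtype.val ⁻¹' W.1.1, W.1.2.preimage continuous_subtype_val⟩
  invFun O := ⟨⟨{b | ∃ h : b ∈ U.1, ⟨b, h⟩ ∈ O}, Subtype.coe_image (s := (O : Set ↥U.1)) ▸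
      U.2.isOpenMap_subtype_val _ O.2⟩, sle_iff.2 fun _ hb => hb.1⟩
  left_inv W := Subtype.ext <| Subtype.ext <| Set.ext fun _ =>
    ⟨fun ⟨_, hb⟩ => hb, fun hb => ⟨sle_iff.1 W.2 hb, hb⟩⟩
  right_inv _ := Opens.ext <| Set.ext fun b => ⟨fun ⟨_, hb⟩ => hb, fun hb => ⟨b.2, hb⟩⟩

theorem opensEquiv_le_iff (U : OpenSets B) {W W' : dOn (OpenSets B) U} :
    U.opensEquiv W ≤ U.opensEquiv W' ↔ sle W.1 W'.1 := by
  rw [sle_iff]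
  exact ⟨fun h b hb => h (x := ⟨b, sle_iff.1 W.2 hb⟩) hb, fun h _ hb => h hb⟩

def orderIsoOfEquiv {U V : OpenSets B} (θ : dOn (OpenSets B) U ≃ dOn (OpenSets B) V)
    (hθ : ∀ a b, sle a.1 b.1 ↔ sle (θ a).1 (θ b).1) : Opens ↥U.1 ≃o Opens ↥V.1 where
  toEquiv := U.opensEquiv.symm.trans (θ.trans V.opensEquiv)
  map_rel_iff' {_ _} := by
    simp only [Equiv.trans_apply]
    rw [opensEquiv_le_iff, ← hθ, ← opensEquiv_le_iff, Equiv.apply_symm_apply,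
      Equiv.apply_symm_apply]

def equivOfOrderIso {U V : OpenSets B} (φ : Opens ↥U.1 ≃o Opens ↥V.1) :
    dOn (OpenSets B) U ≃ dOn (OpenSets B) V :=
  U.opensEquiv.trans (φ.toEquiv.trans V.opensEquiv.symm)

theorem sle_equivOfOrderIso_iff {U V : OpenSets B} (φ : Opens ↥U.1 ≃o Opens ↥V.1)
    (a b : dOn (OpenSets B) U) :
    sle a.1 b.1 ↔ sle (equivOfOrderIso φ a).1 (equivOfOrderIso φ b).1 := by
  rw [← opensEquiv_le_iff, ← opensEquiv_le_iff, equivOfOrderIso, Equiv.trans_apply,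
    Equiv.trans_apply, Equiv.trans_apply, Equiv.trans_apply, Equiv.apply_symm_apply,
    Equiv.apply_symm_apply]
  exact φ.le_iff_le.symm

end OpenSets

namespace MunnElt

section Presheaf
variable {Y E : Type*} [MeetSL E] {P : SPresheaf Y E}

def inv (t : MunnElt P) : MunnElt P where
  e := t.f
  f := t.e
  α := t.α.symm
  θ := t.θ.symm
  α_ord x y := by simpa using (t.α_ord (t.α.symm x) (t.α.symm y)).symm
  θ_ord a b := by simpa using (t.θ_ord (t.θ.symm a) (t.θ.symm b)).symm
  compat x := by
    have h : (⟨P.p x.1, x.2⟩ : dOn E t.f) = t.θ ⟨P.p (t.α.symm x).1, (t.α.symm x).2⟩ :=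
      Subtype.ext (by simpa using t.compat (t.α.symm x))
    rw [h, Equiv.symm_apply_apply]

theorem ext' {t t' : MunnElt P} (he : t.e = t'.e) (hf : t.f = t'.f)
    (hθ : ∀ (W : dOn E t.e) (W' : dOn E t'.e), W.1 = W'.1 → (t.θ W).1 = (t'.θ W').1)
    (hα : ∀ (σ : P.sub t.e) (σ' : P.sub t'.e), σ.1 = σ'.1 → (t.α σ).1 = (t'.α σ').1) :
    t = t' := by
  obtain ⟨e, f, α, θ⟩ := t
  obtain ⟨e', f', α', θ'⟩ := t'
  dsimp only at he hf hθ hα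
  subst he hf
  obtain rfl : θ = θ' := Equiv.ext fun W => Subtype.ext (hθ W W rfl)
  obtain rfl : α = α' := Equiv.ext fun σ => Subtype.ext (hα σ σ rfl)
  rfl

end Presheaf

section OpenSets
variable {B Y : Type*} [TopologicalSpace B] {P : SPresheaf Y (OpenSets B)}

def opensIso (t : MunnElt P) : Opens ↥t.e.1 ≃o Opens ↥t.f.1 :=
  OpenSets.orderIsoOfEquiv t.θ t.θ_ord

theorem opensIso_symm_opensEquiv (t : MunnElt P) (W : dOn (OpenSets B) t.e) :
    t.opensIso.symm (t.f.opensEquiv (t.θ W)) = t.e.opensEquiv W := by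
  simp [opensIso, OpenSets.orderIsoOfEquiv]

variable [QuasiSober B] [T0Space B]

noncomputable def baseHomeomorph (t : MunnElt P) : ↥t.e.1 ≃ₜ ↥t.f.1 :=
  Homeomorph.ofOpensOrderIso t.opensIso.symm

theorem baseHomeomorph_mem_θ_iff (t : MunnElt P) (u : ↥t.e.1) (W : dOn (OpenSets B) t.e) :
    (t.baseHomeomorph u).1 ∈ (t.θ W).1.1 ↔ u.1 ∈ W.1.1 := by
  change _ ∈ t.f.opensEquiv (t.θ W) ↔ u ∈ t.e.opensEquiv W
  rw [baseHomeomorph, Homeomorph.ofOpensOrderIso_mem_iff, opensIso_symm_opensEquiv]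

theorem baseHomeomorph_apply_eq (t : MunnElt P) {u : ↥t.e.1} {v : ↥t.f.1}
    (h : ∀ W : dOn (OpenSets B) t.e, u.1 ∈ W.1.1 ↔ v.1 ∈ (t.θ W).1.1) :
    t.baseHomeomorph u = v := by
  refine Homeomorph.ofOpensOrderIso_apply_eq _ fun V => ?_
  obtain ⟨W, rfl⟩ : ∃ W, t.f.opensEquiv (t.θ W) = V :=
    ⟨t.θ.symm (t.f.opensEquiv.symm V), by simp⟩
  rw [opensIso_symm_opensEquiv]
  exact (h W).symm

theorem baseHomeomorph_inv (t : MunnElt P) : t.inv.baseHomeomorph = t.baseHomeomorph.symm :=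
  Homeomorph.ext fun (v : ↥t.f.1) => t.inv.baseHomeomorph_apply_eq fun (W : dOn _ t.f) => by
    have h := t.baseHomeomorph_mem_θ_iff (t.baseHomeomorph.symm v) (t.θ.symm W)
    rw [Homeomorph.apply_symm_apply, Equiv.apply_symm_apply] at h
    exact h

end OpenSets
end MunnElt

/-! ### Local sections of a local homeomorphism -/

namespace LocalSection
variable {X B : Type*} [TopologicalSpace X] [TopologicalSpace B] {π : X → B}

theorem toFun_congr {σ τ : LocalSection π} (h : σ = τ) {b b' : B} (hb : b ∈ σ.dom)
    (hb' : b' ∈ τ.dom) (hbb' : b = b') : σ.toFun ⟨b, hb⟩ = τ.toFun ⟨b', hb'⟩ := by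
  subst h hbb'
  rfl

theorem xle_iff {ρ σ : LocalSection π} :
    (sectionsPresheaf π).xle ρ σ ↔ ρ.dom ⊆ σ.dom ∧
      ∀ (b : B) (h : b ∈ ρ.dom) (h' : b ∈ σ.dom), ρ.toFun ⟨b, h⟩ = σ.toFun ⟨b, h'⟩ := by
  constructor
  · intro h
    have hdom : ρ.dom = σ.dom ∩ ρ.dom := congrArg LocalSection.dom h
    refine ⟨fun b hb => (hdom ▸ hb : b ∈ σ.dom ∩ ρ.dom).1, fun b hb hb' => ?_⟩
    exact toFun_congr h hb ⟨hb', hb⟩ rfl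
  · rintro ⟨hdom, hval⟩
    exact LocalSection.ext' (Set.inter_eq_right.2 hdom).symm fun b hb hb' => hval b hb hb'.1

theorem mem_range_iff {σ : LocalSection π} {x : X} :
    x ∈ Set.range σ.toFun ↔ ∃ h : π x ∈ σ.dom, σ.toFun ⟨π x, h⟩ = x := by
  constructor
  · rintro ⟨b, rfl⟩
    exact ⟨(σ.sect b).symm ▸ b.2, congrArg σ.toFun (Subtype.ext (σ.sect b))⟩
  · rintro ⟨h, hx⟩
    exact ⟨_, hx⟩

theorem isOpenEmbedding (hπ : IsLocalHomeomorph π) (σ : LocalSection π) :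
    Topology.IsOpenEmbedding σ.toFun :=
  hπ.isOpenEmbedding_of_comp (by convert σ.dom_open.isOpenEmbedding_subtypeVal; exact funext σ.sect)
    σ.cont

theorem exists_dom_subset_mem_range (hπ : IsLocalHomeomorph π) (x : X) (U : OpenSets B)
    (hx : π x ∈ U.1) : ∃ σ : LocalSection π, σ.dom ⊆ U.1 ∧ x ∈ Set.range σ.toFun := by
  obtain ⟨e, hxe, he⟩ := hπ x
  let σ : LocalSection π :=
    { dom := e.target ∩ U.1
      dom_open := e.open_target.inter U.2
      toFun := fun b => e.symm b.1
      cont := e.continuousOn_symm.comp_continuous continuous_subtype_val fun b => b.2.1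
      sect := fun b => he ▸ e.right_inv b.2.1 }
  exact ⟨σ, Set.inter_subset_right, ⟨⟨π x, he ▸ e.map_source hxe, hx⟩, he ▸ e.left_inv hxe⟩⟩

theorem exists_le_le_mem_range (hπ : IsLocalHomeomorph π) {σ τ : LocalSection π} {x : X}
    (hσ : x ∈ Set.range σ.toFun) (hτ : x ∈ Set.range τ.toFun) :
    ∃ ρ : LocalSection π, (sectionsPresheaf π).xle ρ σ ∧ (sectionsPresheaf π).xle ρ τ ∧
      x ∈ Set.range ρ.toFun := by
  let A : OpenSets B := ⟨π '' (Set.range σ.toFun ∩ Set.range τ.toFun),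
    hπ.isOpenMap _ ((σ.isOpenEmbedding hπ).isOpen_range.inter (τ.isOpenEmbedding hπ).isOpen_range)⟩
  refine ⟨(sectionsPresheaf π).act σ A, xle_iff.2 ⟨Set.inter_subset_left, fun _ _ _ => rfl⟩,
    xle_iff.2 ⟨?_, ?_⟩, ?_⟩
  · rintro _ ⟨-, y, ⟨-, hyτ⟩, rfl⟩
    exact (mem_range_iff.1 hyτ).1
  · rintro _ ⟨-, y, ⟨hyσ, hyτ⟩, rfl⟩ -
    exact (mem_range_iff.1 hyσ).2.trans (mem_range_iff.1 hyτ).2.symm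
  · obtain ⟨h, hx⟩ := mem_range_iff.1 hσ
    exact mem_range_iff.2 ⟨⟨h, x, ⟨hσ, hτ⟩, rfl⟩, hx⟩

theorem eq_of_mem_range {σ : LocalSection π} {x y : X} (hx : x ∈ Set.range σ.toFun)
    (hy : y ∈ Set.range σ.toFun) (h : π x = π y) : x = y := by
  obtain ⟨b, rfl⟩ := hx
  obtain ⟨b', rfl⟩ := hy
  rw [σ.sect, σ.sect] at h
  rw [Subtype.ext h]

theorem range_subset_of_xle {ρ σ : LocalSection π} (h : (sectionsPresheaf π).xle ρ σ) :
    Set.range ρ.toFun ⊆ Set.range σ.toFun := by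
  rintro _ ⟨b, rfl⟩
  obtain ⟨hdom, hval⟩ := xle_iff.1 h
  exact ⟨_, (hval b b.2 (hdom b.2)).symm⟩

theorem ext_of_mem_range {σ τ : LocalSection π} (hdom : σ.dom = τ.dom)
    (h : ∀ b, σ.toFun b ∈ Set.range τ.toFun) : σ = τ :=
  LocalSection.ext' hdom fun b hb hb' =>
    eq_of_mem_range (h ⟨b, hb⟩) ⟨_, rfl⟩ (by rw [σ.sect, τ.sect])

end LocalSection

/-! ### From Munn elements to principal partial automorphisms -/

namespace MunnElt
variable {X B : Type*} [TopologicalSpace X] [TopologicalSpace B] [QuasiSober B] [T0Space B]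
  {π : X → B}

theorem mem_dom_α (t : MunnElt (sectionsPresheaf π)) (σ : (sectionsPresheaf π).sub t.e)
    {b : B} (hb : b ∈ σ.1.dom) :
    (t.baseHomeomorph ⟨b, OpenSets.sle_iff.1 σ.2 hb⟩).1 ∈ (t.α σ).1.dom := by
  rw [show (t.α σ).1.dom = _ from congrArg Subtype.val (t.compat σ)]
  exact (t.baseHomeomorph_mem_θ_iff _ _).2 hb

theorem α_apply_eq_of_xle (t : MunnElt (sectionsPresheaf π)) {ρ σ : (sectionsPresheaf π).sub t.e}
    (h : (sectionsPresheaf π).xle ρ.1 σ.1) {b : B} (hρ : b ∈ ρ.1.dom) (hσ : b ∈ σ.1.dom) :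
    (t.α ρ).1.toFun ⟨_, t.mem_dom_α ρ hρ⟩ = (t.α σ).1.toFun ⟨_, t.mem_dom_α σ hσ⟩ :=
  (LocalSection.xle_iff.1 ((t.α_ord ρ σ).1 h)).2 _ _ _

noncomputable def totalFun (hπ : IsLocalHomeomorph π) (t : MunnElt (sectionsPresheaf π))
    (x : ↥(π ⁻¹' t.e.1)) : ↥(π ⁻¹' t.f.1) :=
  let h := LocalSection.exists_dom_subset_mem_range hπ x.1 t.e x.2
  let σ : (sectionsPresheaf π).sub t.e := ⟨h.choose, OpenSets.sle_iff.2 h.choose_spec.1⟩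
  ⟨(t.α σ).1.toFun ⟨_, t.mem_dom_α σ (LocalSection.mem_range_iff.1 h.choose_spec.2).1⟩, by
    rw [Set.mem_preimage, (t.α σ).1.sect]
    exact (t.baseHomeomorph _).2⟩

variable (hπ : IsLocalHomeomorph π) (t : MunnElt (sectionsPresheaf π))

theorem π_totalFun (x : ↥(π ⁻¹' t.e.1)) :
    π (t.totalFun hπ x).1 = (t.baseHomeomorph ⟨π x, x.2⟩).1 :=
  LocalSection.sect _ _

theorem totalFun_mem_range {x : ↥(π ⁻¹' t.e.1)} (σ : (sectionsPresheaf π).sub t.e)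
    (hσ : x.1 ∈ Set.range σ.1.toFun) : (t.totalFun hπ x).1 ∈ Set.range (t.α σ).1.toFun := by
  have h := LocalSection.exists_dom_subset_mem_range hπ x.1 t.e x.2
  set σ₀ : (sectionsPresheaf π).sub t.e := ⟨h.choose, OpenSets.sle_iff.2 h.choose_spec.1⟩
  obtain ⟨ρ, hρσ₀, hρσ, hρx⟩ := LocalSection.exists_le_le_mem_range hπ h.choose_spec.2 hσ
  have hρ : sle ((sectionsPresheaf π).p ρ) t.e := OpenSets.sle_iff.2
    ((LocalSection.xle_iff.1 hρσ).1.trans (OpenSets.sle_iff.1 σ.2))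
  have hb := (LocalSection.mem_range_iff.1 hρx).1
  have hval : (t.totalFun hπ x).1 = (t.α ⟨ρ, hρ⟩).1.toFun ⟨_, t.mem_dom_α ⟨ρ, hρ⟩ hb⟩ :=
    (t.α_apply_eq_of_xle (ρ := ⟨ρ, hρ⟩) (σ := σ₀) hρσ₀ hb
      (LocalSection.mem_range_iff.1 h.choose_spec.2).1).symm
  rw [hval]
  exact LocalSection.range_subset_of_xle ((t.α_ord ⟨ρ, hρ⟩ σ).1 hρσ) ⟨_, rfl⟩

theorem totalFun_eq {x : ↥(π ⁻¹' t.e.1)} (σ : (sectionsPresheaf π).sub t.e)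
    (hσ : π x.1 ∈ σ.1.dom) (hx : σ.1.toFun ⟨π x, hσ⟩ = x) :
    (t.totalFun hπ x).1 = (t.α σ).1.toFun ⟨_, t.mem_dom_α σ hσ⟩ :=
  LocalSection.eq_of_mem_range (t.totalFun_mem_range hπ σ (LocalSection.mem_range_iff.2 ⟨hσ, hx⟩))
    ⟨_, rfl⟩ ((t.π_totalFun hπ x).trans ((t.α σ).1.sect ⟨_, t.mem_dom_α σ hσ⟩).symm)

theorem continuous_totalFun : Continuous (t.totalFun hπ) := by
  refine continuous_iff_continuousAt.2 fun x => ?_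
  obtain ⟨σ, hσe, hx⟩ := LocalSection.exists_dom_subset_mem_range hπ x.1 t.e x.2
  let S : Set ↥(π ⁻¹' t.e.1) := Subtype.val ⁻¹' Set.range σ.toFun
  have hS : IsOpen S := (σ.isOpenEmbedding hπ).isOpen_range.preimage continuous_subtype_val
  refine ContinuousOn.continuousAt ?_ (hS.mem_nhds hx)
  let s : (sectionsPresheaf π).sub t.e := ⟨σ, OpenSets.sle_iff.2 hσe⟩
  have hσS : ∀ y : S, π y.1.1 ∈ σ.dom := fun y => (LocalSection.mem_range_iff.1 y.2).1
  have hrestrict : Subtype.val ∘ S.domRestrict (t.totalFun hπ) =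
      fun y => (t.α s).1.toFun ⟨_, t.mem_dom_α s (hσS y)⟩ :=
    funext fun y => t.totalFun_eq hπ s _ (LocalSection.mem_range_iff.1 y.2).2
  rw [continuousOn_iff_continuous_domRestrict, continuous_induced_rng, hrestrict]
  exact (t.α s).1.cont.comp <| Continuous.subtype_mk (continuous_subtype_val.comp <|
    t.baseHomeomorph.continuous.comp <| Continuous.subtype_mk
      (hπ.continuous.comp (continuous_subtype_val.comp continuous_subtype_val)) _) _

theorem inv_totalFun_totalFun (x : ↥(π ⁻¹' t.e.1)) :
    t.inv.totalFun hπ (t.totalFun hπ x) = x := by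
  obtain ⟨σ, hσe, hx⟩ := LocalSection.exists_dom_subset_mem_range hπ x.1 t.e x.2
  let s : (sectionsPresheaf π).sub t.e := ⟨σ, OpenSets.sle_iff.2 hσe⟩
  have h := t.inv.totalFun_mem_range hπ (t.α s) (t.totalFun_mem_range hπ s hx)
  rw [show t.inv.α (t.α s) = s from t.α.symm_apply_apply s] at h
  refine Subtype.ext (LocalSection.eq_of_mem_range h hx ?_)
  calc π (t.inv.totalFun hπ (t.totalFun hπ x)).1
      = (t.baseHomeomorph.symm ⟨π (t.totalFun hπ x), (t.totalFun hπ x).2⟩).1 :=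
        (t.inv.π_totalFun hπ (t.totalFun hπ x)).trans (by rw [baseHomeomorph_inv]; rfl)
    _ = (t.baseHomeomorph.symm (t.baseHomeomorph ⟨π x, x.2⟩)).1 := by
        congr 2
        exact Subtype.ext (t.π_totalFun hπ x)
    _ = π x := by rw [Homeomorph.symm_apply_apply]

noncomputable def totalHomeomorph : ↥(π ⁻¹' t.e.1) ≃ₜ ↥(π ⁻¹' t.f.1) where
  toFun := t.totalFun hπ
  invFun := t.inv.totalFun hπ
  left_inv := t.inv_totalFun_totalFun hπ
  right_inv := t.inv.inv_totalFun_totalFun hπ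
  continuous_toFun := t.continuous_totalFun hπ
  continuous_invFun := t.inv.continuous_totalFun hπ

noncomputable def toPPAuto : PPAuto π where
  U := t.e.1
  V := t.f.1
  U_open := t.e.2
  V_open := t.f.2
  top := t.totalHomeomorph hπ
  bot := t.baseHomeomorph
  comm := t.π_totalFun hπ

end MunnElt

/-! ### From principal partial automorphisms to Munn elements -/

namespace PPAuto
variable {X B : Type*} [TopologicalSpace X] [TopologicalSpace B] {π : X → B}

def symm (T : PPAuto π) : PPAuto π where
  U := T.V
  V := T.U
  U_open := T.V_open
  V_open := T.U_open
  top := T.top.symm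
  bot := T.bot.symm
  comm y := by
    have hc := T.comm (T.top.symm y)
    rw [Homeomorph.apply_symm_apply] at hc
    have h : (⟨π y.1, y.2⟩ : ↥T.V) = T.bot ⟨π (T.top.symm y).1, (T.top.symm y).2⟩ :=
      Subtype.ext hc
    rw [h, Homeomorph.symm_apply_apply]

def pushSection (T : PPAuto π) (σ : LocalSection π) : LocalSection π where
  dom := {v | ∃ h : v ∈ T.V, (T.bot.symm ⟨v, h⟩).1 ∈ σ.dom}
  dom_open := by
    have := T.V_open.isOpenMap_subtype_val _
      (σ.dom_open.preimage (continuous_subtype_val.comp T.bot.symm.continuous))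
    rwa [Subtype.coe_image] at this
  toFun v := (T.top ⟨σ.toFun ⟨_, v.2.choose_spec⟩, by
    rw [Set.mem_preimage, σ.sect]
    exact (T.bot.symm _).2⟩).1
  cont := by
    refine continuous_subtype_val.comp (T.top.continuous.comp (Continuous.subtype_mk ?_ _))
    exact σ.cont.comp (Continuous.subtype_mk (continuous_subtype_val.comp
      (T.bot.symm.continuous.comp (Continuous.subtype_mk continuous_subtype_val _))) _)
  sect v := by
    rw [T.comm]
    simp [σ.sect]

section PushSection

variable (T : PPAuto π)

theorem pushSection_dom_subset (σ : LocalSection π) : (T.pushSection σ).dom ⊆ T.V :=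
  fun _ hv => hv.1

theorem top_mem_range_pushSection {σ : LocalSection π} {x : ↥(π ⁻¹' T.U)}
    (hx : x.1 ∈ Set.range σ.toFun) : (T.top x).1 ∈ Set.range (T.pushSection σ).toFun := by
  obtain ⟨hxσ, hσx⟩ := LocalSection.mem_range_iff.1 hx
  have hback : (T.bot.symm (T.bot ⟨π x, x.2⟩)).1 = π x := by rw [Homeomorph.symm_apply_apply]
  refine ⟨⟨_, (T.bot _).2, hback ▸ hxσ⟩, ?_⟩
  change (T.top ⟨_, _⟩).1 = _
  congr 2
  exact Subtype.ext ((LocalSection.toFun_congr rfl _ hxσ hback).trans hσx)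

theorem pushSection_mono {σ τ : LocalSection π} (h : (sectionsPresheaf π).xle σ τ) :
    (sectionsPresheaf π).xle (T.pushSection σ) (T.pushSection τ) := by
  obtain ⟨hdom, hval⟩ := LocalSection.xle_iff.1 h
  refine LocalSection.xle_iff.2 ⟨fun v ⟨hv, hvσ⟩ => ⟨hv, hdom hvσ⟩, fun v hvσ hvτ => ?_⟩
  change (T.top ⟨_, _⟩).1 = (T.top ⟨_, _⟩).1
  congr 2
  exact Subtype.ext (hval _ _ _)

theorem symm_pushSection_pushSection {σ : LocalSection π} (hσ : σ.dom ⊆ T.U) :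
    T.symm.pushSection (T.pushSection σ) = σ := by
  refine (LocalSection.ext_of_mem_range ?_ fun b => ?_).symm
  · ext u
    have hback : ∀ hu : u ∈ T.U, ∀ h, (T.bot.symm ⟨(T.symm.bot.symm ⟨u, hu⟩).1, h⟩).1 = u :=
      fun hu _ => congrArg Subtype.val (T.bot.symm_apply_apply ⟨u, hu⟩)
    refine ⟨fun hu => ⟨hσ hu, (T.bot _).2, (hback _ _).symm ▸ hu⟩, fun ⟨hu, _, hu'⟩ => ?_⟩
    exact hback _ _ ▸ hu'
  · have hx : σ.toFun b ∈ π ⁻¹' T.U := by rw [Set.mem_preimage, σ.sect]; exact hσ b.2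
    have := T.symm.top_mem_range_pushSection (x := T.top ⟨_, hx⟩)
      (T.top_mem_range_pushSection (x := ⟨_, hx⟩) ⟨b, rfl⟩)
    rwa [show T.symm.top (T.top ⟨_, hx⟩) = ⟨_, hx⟩ from T.top.symm_apply_apply _] at this

end PushSection

def toMunnElt (T : PPAuto π) : MunnElt (sectionsPresheaf π) where
  e := ⟨T.U, T.U_open⟩
  f := ⟨T.V, T.V_open⟩
  α :=
    { toFun := fun σ => ⟨T.pushSection σ.1, OpenSets.sle_iff.2 (T.pushSection_dom_subset σ.1)⟩
      invFun := fun τ => ⟨T.symm.pushSection τ.1,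
        OpenSets.sle_iff.2 (T.symm.pushSection_dom_subset τ.1)⟩
      left_inv := fun σ => Subtype.ext (T.symm_pushSection_pushSection (OpenSets.sle_iff.1 σ.2))
      right_inv := fun τ =>
        Subtype.ext (T.symm.symm_pushSection_pushSection (OpenSets.sle_iff.1 τ.2)) }
  θ := OpenSets.equivOfOrderIso T.bot.opensCongr
  α_ord σ τ := by
    refine ⟨T.pushSection_mono, fun h => ?_⟩
    rw [← T.symm_pushSection_pushSection (OpenSets.sle_iff.1 σ.2),
      ← T.symm_pushSection_pushSection (OpenSets.sle_iff.1 τ.2)]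
    exact T.symm.pushSection_mono h
  θ_ord := OpenSets.sle_equivOfOrderIso_iff _
  compat _ := rfl

theorem ext' {s t : PPAuto π} (hU : s.U = t.U) (hV : s.V = t.V)
    (htop : ∀ (x : X) (hx : x ∈ π ⁻¹' s.U) (hx' : x ∈ π ⁻¹' t.U),
      (s.top ⟨x, hx⟩).1 = (t.top ⟨x, hx'⟩).1)
    (hbot : ∀ (u : B) (hu : u ∈ s.U) (hu' : u ∈ t.U),
      (s.bot ⟨u, hu⟩).1 = (t.bot ⟨u, hu'⟩).1) : s = t := by
  obtain ⟨U, V, hUo, hVo, top, bot, comm⟩ := s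
  obtain ⟨U', V', hUo', hVo', top', bot', comm'⟩ := t
  dsimp only at hU hV htop hbot
  subst hU hV
  obtain rfl : top = top' := Homeomorph.ext fun x => Subtype.ext (htop x.1 x.2 x.2)
  obtain rfl : bot = bot' := Homeomorph.ext fun u => Subtype.ext (hbot u.1 u.2 u.2)
  rfl

variable [QuasiSober B] [T0Space B]

theorem baseHomeomorph_toMunnElt (T : PPAuto π) : T.toMunnElt.baseHomeomorph = T.bot :=
  Homeomorph.ext fun (u : ↥T.U) => T.toMunnElt.baseHomeomorph_apply_eq fun W =>
    have hback : (T.bot.symm (T.bot u)).1 ∈ W.1.1 ↔ u.1 ∈ W.1.1 := by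
      rw [Homeomorph.symm_apply_apply]
    ⟨fun hu => ⟨(T.bot u).2, hback.2 hu⟩, fun ⟨_, hu⟩ => hback.1 hu⟩

theorem toPPAuto_toMunnElt (hπ : IsLocalHomeomorph π) (T : PPAuto π) :
    T.toMunnElt.toPPAuto hπ = T := by
  refine ext' rfl rfl (fun x hx _ => ?_) fun u _ _ =>
    congrArg Subtype.val (DFunLike.congr_fun T.baseHomeomorph_toMunnElt _)
  obtain ⟨σ, hσU, hxσ⟩ := LocalSection.exists_dom_subset_mem_range hπ x T.toMunnElt.e hx
  refine LocalSection.eq_of_mem_range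
    (T.toMunnElt.totalFun_mem_range hπ ⟨σ, OpenSets.sle_iff.2 hσU⟩ hxσ)
    (T.top_mem_range_pushSection (x := ⟨x, hx⟩) hxσ)
    ((T.toMunnElt.π_totalFun hπ ⟨x, hx⟩).trans ?_)
  rw [T.comm]
  exact congrArg Subtype.val (DFunLike.congr_fun T.baseHomeomorph_toMunnElt _)

end PPAuto

namespace MunnElt
variable {X B : Type*} [TopologicalSpace X] [TopologicalSpace B] [QuasiSober B] [T0Space B]
  {π : X → B} (hπ : IsLocalHomeomorph π) (t : MunnElt (sectionsPresheaf π))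

theorem θ_toPPAuto_toMunnElt (W : dOn (OpenSets B) t.e) :
    ((t.toPPAuto hπ).toMunnElt.θ W).1 = (t.θ W).1 := by
  refine Subtype.ext (Set.ext fun v => ⟨fun ⟨h, hv⟩ => ?_, fun hv => ?_⟩)
  · have := (t.baseHomeomorph_mem_θ_iff (t.baseHomeomorph.symm ⟨v, h⟩) W).2 hv
    rwa [Homeomorph.apply_symm_apply] at this
  · have h := OpenSets.sle_iff.1 (t.θ W).2 hv
    refine ⟨h, (t.baseHomeomorph_mem_θ_iff (t.baseHomeomorph.symm ⟨v, h⟩) W).1 ?_⟩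
    rwa [Homeomorph.apply_symm_apply]

theorem toMunnElt_toPPAuto : (t.toPPAuto hπ).toMunnElt = t := by
  refine ext' rfl rfl (fun W W' h => ?_) fun ⟨σ, hσ⟩ ⟨σ', hσ'⟩ h => ?_
  · obtain rfl : W = W' := Subtype.ext h
    exact t.θ_toPPAuto_toMunnElt hπ W
  · obtain rfl : σ = σ' := h
    refine LocalSection.ext_of_mem_range ?_ fun b => t.totalFun_mem_range hπ ⟨σ, hσ'⟩ ⟨_, rfl⟩
    exact (congrArg Subtype.val (t.θ_toPPAuto_toMunnElt hπ ⟨_, hσ⟩)).trans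
      (congrArg Subtype.val (t.compat ⟨σ, hσ⟩)).symm

end MunnElt

/-! ### Products -/

theorem exists_apply_eq_iff_of_comp {α β γ : Type*} {s r : Set α} {t : Set β} {f : s → β}
    {g : t → γ} {h : r → γ} (hr : ∀ x, x ∈ r ↔ ∃ hx : x ∈ s, f ⟨x, hx⟩ ∈ t)
    (hh : ∀ x (hx : x ∈ r) (hs : x ∈ s) (ht : f ⟨x, hs⟩ ∈ t), h ⟨x, hx⟩ = g ⟨_, ht⟩) (x : α)
    (z : γ) : (∃ hx : x ∈ r, h ⟨x, hx⟩ = z) ↔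
      ∃ y, (∃ hx : x ∈ s, f ⟨x, hx⟩ = y) ∧ ∃ hy : y ∈ t, g ⟨y, hy⟩ = z := by
  constructor
  · rintro ⟨hx, rfl⟩
    obtain ⟨hs, ht⟩ := (hr x).1 hx
    exact ⟨_, ⟨hs, rfl⟩, ht, (hh x hx hs ht).symm⟩
  · rintro ⟨_, ⟨hs, rfl⟩, ht, rfl⟩
    exact ⟨(hr x).2 ⟨hs, ht⟩, hh x _ hs ht⟩

namespace PPAuto
variable {X B : Type*} [TopologicalSpace X] [TopologicalSpace B] {π : X → B}

theorem mem_U_iff {T : PPAuto π} {u : B} : u ∈ T.U ↔ ∃ v, T.mapsBot u v :=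
  ⟨fun h => ⟨_, h, rfl⟩, fun ⟨_, h, _⟩ => h⟩

theorem mem_V_iff {T : PPAuto π} {v : B} : v ∈ T.V ↔ ∃ u, T.mapsBot u v :=
  ⟨fun h => ⟨_, (T.bot.symm ⟨v, h⟩).2, by simp⟩, fun ⟨u, hu, hv⟩ => hv ▸ (T.bot ⟨u, hu⟩).2⟩

theorem ext_of_maps {s t : PPAuto π} (hT : ∀ x y, s.mapsTop x y ↔ t.mapsTop x y)
    (hB : ∀ u v, s.mapsBot u v ↔ t.mapsBot u v) : s = t := by
  refine ext' (Set.ext fun u => ?_) (Set.ext fun v => ?_) (fun x hx _ => ?_) fun u hu _ => ?_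
  · rw [mem_U_iff, mem_U_iff]
    exact exists_congr (hB u)
  · rw [mem_V_iff, mem_V_iff]
    exact exists_congr fun u => hB u v
  · exact ((hT x _).1 ⟨hx, rfl⟩).2.symm
  · exact ((hB u _).1 ⟨hu, rfl⟩).2.symm

theorem eq_of_isPPMul {mulL : PPAuto π → PPAuto π → PPAuto π} (hL : IsPPMul mulL)
    {a b c : PPAuto π} (hU : ∀ u, u ∈ c.U ↔ ∃ hu : u ∈ b.U, (b.bot ⟨u, hu⟩).1 ∈ a.U)
    (hbot : ∀ u (hc : u ∈ c.U) (hb : u ∈ b.U) (ha : (b.bot ⟨u, hb⟩).1 ∈ a.U),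
      (c.bot ⟨u, hc⟩).1 = (a.bot ⟨_, ha⟩).1)
    (htop : ∀ x (hc : x ∈ π ⁻¹' c.U) (hb : x ∈ π ⁻¹' b.U) (ha : (b.top ⟨x, hb⟩).1 ∈ π ⁻¹' a.U),
      (c.top ⟨x, hc⟩).1 = (a.top ⟨_, ha⟩).1) :
    mulL a b = c := by
  have hUtop : ∀ x, x ∈ π ⁻¹' c.U ↔ ∃ hx : x ∈ π ⁻¹' b.U, (b.top ⟨x, hx⟩).1 ∈ π ⁻¹' a.U :=
    fun x => (hU (π x)).trans (exists_congr fun hx => by rw [Set.mem_preimage, b.comm])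
  refine ext_of_maps (fun x z => ?_) fun u w => ?_
  · exact ((hL a b).1 x z).trans (exists_apply_eq_iff_of_comp (f := fun x => (b.top x).1)
      (g := fun y => (a.top y).1) (h := fun x => (c.top x).1) hUtop htop x z).symm
  · exact ((hL a b).2 u w).trans (exists_apply_eq_iff_of_comp (f := fun u => (b.bot u).1)
      (g := fun v => (a.bot v).1) (h := fun u => (c.bot u).1) hU hbot u w).symm

end PPAuto

theorem sle_refl {E : Type*} [MeetSL E] (e : E) : sle e e := (MeetSL.idem e).symm

namespace MunnElt

section Presheaf
variable {Y E : Type*} [MeetSL E] {P : SPresheaf Y E} {a b c : MunnElt P}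

theorem sle_e_iff_of_mapsE (hc : ∀ h k, c.mapsE h k ↔ ∃ m, b.mapsE h m ∧ a.mapsE m k) {h : E} :
    sle h c.e ↔ ∃ hb : sle h b.e, sle (b.θ ⟨h, hb⟩).1 a.e := by
  constructor
  · intro hce
    obtain ⟨m, ⟨hb, rfl⟩, ha, -⟩ := (hc h _).1 ⟨hce, rfl⟩
    exact ⟨hb, ha⟩
  · rintro ⟨hb, ha⟩
    exact ((hc h _).2 ⟨_, ⟨hb, rfl⟩, ha, rfl⟩).1

theorem θ_eq_of_mapsE (hc : ∀ h k, c.mapsE h k ↔ ∃ m, b.mapsE h m ∧ a.mapsE m k) {h : E}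
    (hce : sle h c.e) (hb : sle h b.e) (ha : sle (b.θ ⟨h, hb⟩).1 a.e) :
    (c.θ ⟨h, hce⟩).1 = (a.θ ⟨(b.θ ⟨h, hb⟩).1, ha⟩).1 := by
  obtain ⟨_, ⟨_, rfl⟩, _, hk⟩ := (hc h _).1 ⟨hce, rfl⟩
  exact hk.symm

end Presheaf

section OpenSets
variable {B Y : Type*} [TopologicalSpace B] [QuasiSober B] [T0Space B]
  {P : SPresheaf Y (OpenSets B)} {a b c : MunnElt P}

theorem mem_e_iff_of_mapsE (hc : ∀ h k, c.mapsE h k ↔ ∃ m, b.mapsE h m ∧ a.mapsE m k) (u : B) :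
    u ∈ c.e.1 ↔ ∃ hu : u ∈ b.e.1, (b.baseHomeomorph ⟨u, hu⟩).1 ∈ a.e.1 := by
  constructor
  · intro hu
    obtain ⟨hcb, hca⟩ := (sle_e_iff_of_mapsE hc).1 (sle_refl c.e)
    exact ⟨OpenSets.sle_iff.1 hcb hu,
      OpenSets.sle_iff.1 hca ((b.baseHomeomorph_mem_θ_iff _ ⟨c.e, hcb⟩).2 hu)⟩
  · rintro ⟨hub, hua⟩
    set W := b.θ.symm ⟨a.e * b.f, OpenSets.sle_iff.2 Set.inter_subset_right⟩
    have hW : (b.θ W).1 = a.e * b.f := by simp [W]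
    have hWc : sle W.1 c.e :=
      (sle_e_iff_of_mapsE hc).2 ⟨W.2, hW ▸ OpenSets.sle_iff.2 Set.inter_subset_left⟩
    refine OpenSets.sle_iff.1 hWc ((b.baseHomeomorph_mem_θ_iff ⟨u, hub⟩ W).1 ?_)
    rw [hW]
    exact ⟨hua, (b.baseHomeomorph ⟨u, hub⟩).2⟩

theorem baseHomeomorph_eq_of_mapsE (hc : ∀ h k, c.mapsE h k ↔ ∃ m, b.mapsE h m ∧ a.mapsE m k)
    {u : B} (hu : u ∈ c.e.1) (hub : u ∈ b.e.1) (hua : (b.baseHomeomorph ⟨u, hub⟩).1 ∈ a.e.1) :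
    (c.baseHomeomorph ⟨u, hu⟩).1 = (a.baseHomeomorph ⟨_, hua⟩).1 := by
  have key : ∀ W : dOn (OpenSets B) c.e,
      u ∈ W.1.1 ↔ (a.baseHomeomorph ⟨_, hua⟩).1 ∈ (c.θ W).1.1 := by
    intro W
    obtain ⟨hWb, hWa⟩ := (sle_e_iff_of_mapsE hc).1 W.2
    rw [θ_eq_of_mapsE hc W.2 hWb hWa, a.baseHomeomorph_mem_θ_iff _ ⟨_, hWa⟩,
      b.baseHomeomorph_mem_θ_iff ⟨u, hub⟩ ⟨_, hWb⟩]
  have hf : (a.baseHomeomorph ⟨_, hua⟩).1 ∈ c.f.1 :=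
    OpenSets.sle_iff.1 (c.θ _).2 ((key ⟨c.e, sle_refl c.e⟩).1 hu)
  exact congrArg Subtype.val (c.baseHomeomorph_apply_eq (v := ⟨_, hf⟩) key)

end OpenSets

variable {X B : Type*} [TopologicalSpace X] [TopologicalSpace B] [QuasiSober B] [T0Space B]
  {π : X → B} (hπ : IsLocalHomeomorph π)

theorem totalFun_eq_of_maps {a b c : MunnElt (sectionsPresheaf π)}
    (hc1 : ∀ σ ρ, c.maps σ ρ ↔ ∃ τ, b.maps σ τ ∧ a.maps τ ρ)
    (hc2 : ∀ h k, c.mapsE h k ↔ ∃ m, b.mapsE h m ∧ a.mapsE m k) {x : X}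
    (hc : x ∈ π ⁻¹' c.e.1) (hb : x ∈ π ⁻¹' b.e.1)
    (ha : (b.totalFun hπ ⟨x, hb⟩).1 ∈ π ⁻¹' a.e.1) :
    (c.totalFun hπ ⟨x, hc⟩).1 = (a.totalFun hπ ⟨_, ha⟩).1 := by
  obtain ⟨σ, hσc, hxσ⟩ := LocalSection.exists_dom_subset_mem_range hπ x c.e hc
  let s : (sectionsPresheaf π).sub c.e := ⟨σ, OpenSets.sle_iff.2 hσc⟩
  obtain ⟨τ, ⟨hσb, hτ⟩, hτa, hρ⟩ := (hc1 σ (c.α s).1).1 ⟨s.2, rfl⟩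
  have hy := b.totalFun_mem_range hπ (x := ⟨x, hb⟩) ⟨σ, hσb⟩ hxσ
  rw [hτ] at hy
  have hz := a.totalFun_mem_range hπ (x := ⟨_, ha⟩) ⟨τ, hτa⟩ hy
  rw [hρ] at hz
  refine LocalSection.eq_of_mem_range (c.totalFun_mem_range hπ s hxσ) hz ?_
  have hua : (b.baseHomeomorph ⟨π x, hb⟩).1 ∈ a.e.1 := b.π_totalFun hπ ⟨x, hb⟩ ▸ ha
  rw [c.π_totalFun hπ, a.π_totalFun hπ, baseHomeomorph_eq_of_mapsE hc2 hc hb hua]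
  congr 2
  exact Subtype.ext (b.π_totalFun hπ ⟨x, hb⟩).symm

theorem toPPAuto_mul {mulT : MunnElt (sectionsPresheaf π) → MunnElt (sectionsPresheaf π) →
      MunnElt (sectionsPresheaf π)} (hT : IsMunnMul mulT)
    {mulL : PPAuto π → PPAuto π → PPAuto π} (hL : IsPPMul mulL)
    (a b : MunnElt (sectionsPresheaf π)) :
    (mulT a b).toPPAuto hπ = mulL (a.toPPAuto hπ) (b.toPPAuto hπ) :=
  (PPAuto.eq_of_isPPMul hL (mem_e_iff_of_mapsE (hT a b).2)
    (fun _ => baseHomeomorph_eq_of_mapsE (hT a b).2)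
    (fun _ => totalFun_eq_of_maps hπ (hT a b).1 (hT a b).2)).symm

end MunnElt

theorem munn_of_sections_iso_general {X B : Type*} [TopologicalSpace X] [TopologicalSpace B]
    [QuasiSober B] [T0Space B]
    (π : X → B) (hπ : IsLocalHomeomorph π)
    (mulT : MunnElt (sectionsPresheaf π) → MunnElt (sectionsPresheaf π) →
      MunnElt (sectionsPresheaf π))
    (hT : IsMunnMul mulT)
    (mulL : PPAuto π → PPAuto π → PPAuto π) (hL : IsPPMul mulL) :
    ∃ i : MunnElt (sectionsPresheaf π) → PPAuto π,
      Function.Bijective i ∧ ∀ a b, i (mulT a b) = mulL (i a) (i b) :=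
  ⟨MunnElt.toPPAuto hπ,
    Function.bijective_iff_has_inverse.2 ⟨PPAuto.toMunnElt, MunnElt.toMunnElt_toPPAuto hπ,
      PPAuto.toPPAuto_toMunnElt hπ⟩,
    MunnElt.toPPAuto_mul hπ hT hL⟩

/-- for an étale bundle `π : X → B` over a sober base, the generalised Munn
semigroup of the sheaf of sections `Γ(π)` is isomorphic to `La(π)`. -/
theorem munn_of_sections_iso {X B : Type*} [TopologicalSpace X] [TopologicalSpace B]
    [QuasiSober B] [T0Space B]
    (π : X → B) (hπ : IsLocalHomeomorph π) (hsurj : Function.Surjective π)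
    (mulT : MunnElt (sectionsPresheaf π) → MunnElt (sectionsPresheaf π) →
      MunnElt (sectionsPresheaf π))
    (hT : IsMunnMul mulT)
    (mulL : PPAuto π → PPAuto π → PPAuto π) (hL : IsPPMul mulL) :
    ∃ i : MunnElt (sectionsPresheaf π) → PPAuto π,
      Function.Bijective i ∧ ∀ a b, i (mulT a b) = mulL (i a) (i b) :=
  munn_of_sections_iso_general π hπ mulT hT mulL hL
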